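/- Let C be a cocomplete category, 𝒳, 𝒳', 𝒴 small groupoids, and f : 𝒳 ⥤ 𝒳' a functor. Then there is a natural isomorphism (f × id_𝒴)_! ∘ pr_𝒳^* ≅ pr_{𝒳'}^* ∘ f_! of functors (𝒳 ⥤ C) → (𝒳' × 𝒴 ⥤ C), where pr_𝒳 : 𝒳 × 𝒴 → 𝒳 and pr_{𝒳'} : 𝒳' × 𝒴 → 𝒳' are the projection functors (the Beck–Chevalley condition for the commuting square formed by f × id_𝒴 and the two projections). -/

import Mathlib

/-!
STATEMENT 13: Beck–Chevalley for left Kan extensions along product projections: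
`(f × id_𝒴)_! ∘ pr_𝒳^* ≅ pr_{𝒳'}^* ∘ f_!`.
-/

open CategoryTheory Limits
open Functor

universe v u

section Aux

variable {C : Type u} [Category.{v} C]

/-- The "swap-curry" equivalence `(𝒳 × 𝒴 ⥤ C) ≌ (𝒴 ⥤ 𝒳 ⥤ C)`. -/
noncomputable def bcPhi (𝒳 𝒴 : Type v) [Groupoid.{v} 𝒳] [Groupoid.{v} 𝒴] :
    ((𝒳 × 𝒴) ⥤ C) ≌ (𝒴 ⥤ 𝒳 ⥤ C) :=
  ((Prod.braiding 𝒴 𝒳).congrLeft (E := C)).symm.trans (currying).symm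

variable {𝒳 𝒳' 𝒴 : Type v} [Groupoid.{v} 𝒳] [Groupoid.{v} 𝒳'] [Groupoid.{v} 𝒴]

/-- An alternative model for `(f × id)_!`, conjugating `𝒴`-pointwise application of `L`
by the swap-curry equivalences. -/
noncomputable def bcLalt (𝒴 : Type v) [Groupoid.{v} 𝒴] (L : (𝒳 ⥤ C) ⥤ (𝒳' ⥤ C)) :
    ((𝒳 × 𝒴) ⥤ C) ⥤ ((𝒳' × 𝒴) ⥤ C) :=
  (bcPhi 𝒳 𝒴).functor ⋙ (whiskeringRight 𝒴 (𝒳 ⥤ C) (𝒳' ⥤ C)).obj L ⋙ (bcPhi 𝒳' 𝒴).inverse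

/-- `bcLalt` is left adjoint to the conjugated precomposition functor. -/
noncomputable def bcAdjAlt0 (f : 𝒳 ⥤ 𝒳') (L : (𝒳 ⥤ C) ⥤ (𝒳' ⥤ C))
    (adj : L ⊣ (whiskeringLeft 𝒳 𝒳' C).obj f) :
    bcLalt 𝒴 L ⊣ (bcPhi 𝒳' 𝒴).functor ⋙
      (whiskeringRight 𝒴 (𝒳' ⥤ C) (𝒳 ⥤ C)).obj ((whiskeringLeft 𝒳 𝒳' C).obj f) ⋙
      (bcPhi 𝒳 𝒴).inverse :=
  (bcPhi 𝒳 𝒴).toAdjunction.comp ((adj.whiskerRight 𝒴).comp (bcPhi 𝒳' 𝒴).symm.toAdjunction)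

/-- The conjugated precomposition functor is isomorphic to precomposition with `f × 𝟭 𝒴`. -/
noncomputable def bcRIso (f : 𝒳 ⥤ 𝒳') :
    ((bcPhi 𝒳' 𝒴).functor ⋙
      (whiskeringRight 𝒴 (𝒳' ⥤ C) (𝒳 ⥤ C)).obj ((whiskeringLeft 𝒳 𝒳' C).obj f) ⋙
      (bcPhi 𝒳 𝒴).inverse) ≅ (whiskeringLeft (𝒳 × 𝒴) (𝒳' × 𝒴) C).obj (f.prod (𝟭 𝒴)) :=
  NatIso.ofComponents (fun H => NatIso.ofComponents (fun p => Iso.refl _) (by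
    intro p q g
    erw [Category.comp_id, Category.id_comp]
    change H.map _ ≫ H.map _ = _
    rw [← H.map_comp]
    simp [prod_comp])) (by
    intro H K η
    ext p
    simp only [NatTrans.comp_app]
    exact (Category.comp_id _).trans (Category.id_comp _).symm)

/-- `bcLalt 𝒴 L` is left adjoint to precomposition with `f × 𝟭 𝒴`. -/
noncomputable def bcAdjAlt (f : 𝒳 ⥤ 𝒳') (L : (𝒳 ⥤ C) ⥤ (𝒳' ⥤ C))
    (adj : L ⊣ (whiskeringLeft 𝒳 𝒳' C).obj f) :
    bcLalt 𝒴 L ⊣ (whiskeringLeft (𝒳 × 𝒴) (𝒳' × 𝒴) C).obj (f.prod (𝟭 𝒴)) :=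
  (bcAdjAlt0 f L adj).ofNatIsoRight (bcRIso f)

/-- Beck–Chevalley holds on the nose (up to iso) for the alternative model. -/
noncomputable def bcIso2 (L : (𝒳 ⥤ C) ⥤ (𝒳' ⥤ C)) :
    ((whiskeringLeft (𝒳 × 𝒴) 𝒳 C).obj (CategoryTheory.Prod.fst 𝒳 𝒴) ⋙ bcLalt 𝒴 L) ≅
      (L ⋙ (whiskeringLeft (𝒳' × 𝒴) 𝒳' C).obj (CategoryTheory.Prod.fst 𝒳' 𝒴)) :=
  NatIso.ofComponents (fun G => NatIso.ofComponents (fun p => Iso.refl _) (by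
    intro p q g
    erw [Category.comp_id, Category.id_comp]
    have h : (currying.inverse.obj
        (CategoryTheory.Prod.swap 𝒴 𝒳 ⋙ CategoryTheory.Prod.fst 𝒳 𝒴 ⋙ G)).map g.2 = 𝟙 G := by
      ext x
      simp
    show (L.map (show G ⟶ G from (currying.inverse.obj
        (CategoryTheory.Prod.swap 𝒴 𝒳 ⋙ CategoryTheory.Prod.fst 𝒳 𝒴 ⋙ G)).map g.2)).app p.1 ≫
        (L.obj G).map g.1 = (L.obj G).map g.1
    rw [show (show G ⟶ G from (currying.inverse.obj
        (CategoryTheory.Prod.swap 𝒴 𝒳 ⋙ CategoryTheory.Prod.fst 𝒳 𝒴 ⋙ G)).map g.2) = 𝟙 G from h]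
    simp)) (by
    intro G H η
    ext p
    simp only [NatTrans.comp_app]
    erw [Category.comp_id, Category.id_comp]
    have h : (currying.inverse.map
        (whiskerLeft (CategoryTheory.Prod.swap 𝒴 𝒳 ⋙ CategoryTheory.Prod.fst 𝒳 𝒴) η)).app p.2 = η := by
      ext x
      simp
    show (L.map ((currying.inverse.map
        (whiskerLeft (CategoryTheory.Prod.swap 𝒴 𝒳 ⋙ CategoryTheory.Prod.fst 𝒳 𝒴) η)).app p.2)).app p.1 =
      (L.map η).app p.1
    rw [h])

end Aux

theorem beck_chevalley_along_product_projections
    {C : Type u} [Category.{v} C] [HasColimits C]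
    {𝒳 𝒳' 𝒴 : Type v} [Groupoid.{v} 𝒳] [Groupoid.{v} 𝒳'] [Groupoid.{v} 𝒴]
    (f : 𝒳 ⥤ 𝒳')
    -- `f_!`, the left adjoint to precomposition `f^*` (left Kan extension along `f`)
    (L : (𝒳 ⥤ C) ⥤ (𝒳' ⥤ C))
    (adj : L ⊣ (whiskeringLeft 𝒳 𝒳' C).obj f)
    -- `(f × id_𝒴)_!`, the left adjoint to precomposition `(f × id_𝒴)^*`
    (L' : ((𝒳 × 𝒴) ⥤ C) ⥤ ((𝒳' × 𝒴) ⥤ C))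
    (adj' : L' ⊣ (whiskeringLeft (𝒳 × 𝒴) (𝒳' × 𝒴) C).obj (f.prod (𝟭 𝒴))) :
    Nonempty
      (((whiskeringLeft (𝒳 × 𝒴) 𝒳 C).obj (CategoryTheory.Prod.fst 𝒳 𝒴) ⋙ L') ≅
        (L ⋙ (whiskeringLeft (𝒳' × 𝒴) 𝒳' C).obj (CategoryTheory.Prod.fst 𝒳' 𝒴))) := by
  exact ⟨isoWhiskerLeft _ (adj'.leftAdjointUniq (bcAdjAlt f L adj)) ≪≫ bcIso2 L⟩
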